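/- arXiv:1005.2786 — 5 statements merged into one kernel-verified Lean document; each statement's English description precedes it below -/
import Mathlib

section
/- Let ε > 0, α(ε) = (1 − √(1+4ε²))/(2ε²), and μ ≥ 0. Then for every t ∈ ℝ, ∫_{−∞}^{t} | e^{α(ε)(t−s)} / √(1+4ε²) − e^{−(t−s)} | e^{μ s} ds ≤ C₁(ε) e^{μ t}, where C₁(ε) = −(1/α(ε)) ( 1 − 1/√(1+4ε²) + 1 + α(ε) ). Moreover C₁(ε) → 0 as ε → 0⁺. -/
open Real MeasureTheory Filter Set

lemma expIic_integrableOn (c t : ℝ) (hc : 0 < c) :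
    IntegrableOn (fun s => Real.exp (c * s)) (Set.Iic t) := by
  apply MeasureTheory.integrableOn_Iic_of_intervalIntegral_norm_bounded
    (Real.exp (c * t) / c) t (a := fun i : ℝ => i) (l := atBot)
    (fun i => (Real.continuous_exp.comp (continuous_const.mul continuous_id)).integrableOn_Ioc)
    tendsto_id
  filter_upwards with i
  simp only [Function.comp, Pi.mul_apply, Real.norm_eq_abs, Real.abs_exp, id]
  have h2 : (c * ∫ x in i..t, Real.exp (c * x)) = Real.exp (c * t) - Real.exp (c * i) := by
    rw [intervalIntegral.mul_integral_comp_mul_left (f := Real.exp)]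
    exact integral_exp
  have h3 : (∫ x in i..t, Real.exp (c * x)) = (Real.exp (c * t) - Real.exp (c * i)) / c :=
    eq_div_of_mul_eq hc.ne' (by linarith [h2])
  rw [h3]
  gcongr
  linarith [(Real.exp_pos (c * i)).le]

lemma expIic_integral (c t : ℝ) (hc : 0 < c) :
    ∫ s in Set.Iic t, Real.exp (c * s) = Real.exp (c * t) / c := by
  have hderiv : ∀ x ∈ Set.Iic t, HasDerivAt (fun s => Real.exp (c * s) / c) (Real.exp (c * x)) x := by
    intro x _
    have h := ((hasDerivAt_id x).const_mul c).exp.div_const c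
    simpa [mul_comm, mul_div_assoc, mul_div_cancel_left₀ _ hc.ne'] using h
  have htend : Tendsto (fun s => Real.exp (c * s) / c) atBot (nhds 0) := by
    have : Tendsto (fun s : ℝ => c * s) atBot atBot := by
      exact (tendsto_const_mul_atBot_of_pos hc).mpr tendsto_id
    simpa using (Real.tendsto_exp_atBot.comp this).div_const c
  have := integral_Iic_of_hasDerivAt_of_tendsto' hderiv (expIic_integrableOn c t hc) htend
  simpa using this

theorem stmt_3
    (α C₁ : ℝ → ℝ)
    (hα : ∀ ε : ℝ, 0 < ε → α ε = (1 - Real.sqrt (1 + 4 * ε ^ 2)) / (2 * ε ^ 2))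
    (hC₁ : ∀ ε : ℝ, 0 < ε →
      C₁ ε = -(1 / α ε) * (1 - 1 / Real.sqrt (1 + 4 * ε ^ 2) + 1 + α ε)) :
    (∀ ε : ℝ, 0 < ε → ∀ μ : ℝ, 0 ≤ μ → ∀ t : ℝ,
      (∫ s in Set.Iio t,
        |Real.exp (α ε * (t - s)) / Real.sqrt (1 + 4 * ε ^ 2) - Real.exp (-(t - s))| *
          Real.exp (μ * s)) ≤ C₁ ε * Real.exp (μ * t)) ∧
    Tendsto C₁ (nhdsWithin 0 (Set.Ioi 0)) (nhds 0) := by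
  -- alternate formula for α
  have halt : ∀ ε : ℝ, 0 < ε → α ε = -2 / (1 + Real.sqrt (1 + 4 * ε ^ 2)) := by
    intro ε hε
    have hD : (0:ℝ) ≤ 1 + 4 * ε ^ 2 := by positivity
    have hqq : Real.sqrt (1 + 4 * ε ^ 2) * Real.sqrt (1 + 4 * ε ^ 2) = 1 + 4 * ε ^ 2 :=
      Real.mul_self_sqrt hD
    have hq0 : 0 < Real.sqrt (1 + 4 * ε ^ 2) := Real.sqrt_pos.mpr (by positivity)
    rw [hα ε hε]
    have h1 : (1:ℝ) + Real.sqrt (1 + 4 * ε ^ 2) ≠ 0 := by positivity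
    field_simp
    nlinarith [hqq]
  constructor
  · intro ε hε μ hμ t
    set q := Real.sqrt (1 + 4 * ε ^ 2) with hqdef
    have hqsq : q ^ 2 = 1 + 4 * ε ^ 2 := Real.sq_sqrt (by positivity)
    have hq1 : 1 < q := by nlinarith [Real.sqrt_nonneg (1 + 4 * ε ^ 2), hqsq, sq_nonneg ε]
    have hq0 : 0 < q := lt_trans one_pos hq1
    set a := α ε with hadef
    have ha : a = -2 / (1 + q) := halt ε hε
    have ha0 : a < 0 := by rw [ha]; apply div_neg_of_neg_of_pos <;> [norm_num; linarith]
    have ha1 : -1 < a := by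
      rw [ha, neg_lt, neg_div, neg_neg, div_lt_one (by linarith)]; linarith
    have hμa : 0 < μ - a := by linarith
    have hμ1 : 0 < μ + 1 := by linarith
    -- dominating function
    set g : ℝ → ℝ := fun s =>
      (2 - 1 / q) * Real.exp (a * t) * Real.exp ((μ - a) * s)
        - Real.exp (-t) * Real.exp ((μ + 1) * s) with hgdef
    have hg_int : IntegrableOn g (Set.Iic t) :=
      (((expIic_integrableOn (μ - a) t hμa).const_mul _)).sub
        ((expIic_integrableOn (μ + 1) t hμ1).const_mul _)
    -- pointwise bound
    have hpt : ∀ s ∈ Set.Iio t,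
        |Real.exp (a * (t - s)) / q - Real.exp (-(t - s))| * Real.exp (μ * s) ≤ g s := by
      intro s hs
      have hu : 0 < t - s := by simp at hs; linarith
      set x := Real.exp (a * (t - s)) with hxdef
      set y := Real.exp (-(t - s)) with hydef
      have hx0 : 0 < x := Real.exp_pos _
      have hy0 : 0 < y := Real.exp_pos _
      have hyx : y ≤ x := Real.exp_le_exp.mpr (by nlinarith [mul_le_mul_of_nonneg_right ha1.le hu.le])
      have hq1' : 1 / q ≤ 1 := by rw [div_le_one hq0]; exact hq1.le
      have hsum : x / q + (2 - 1 / q) * x = 2 * x := by ring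
      have hdiff : (2 - 1 / q) * x - x / q = 2 * x * (1 - 1 / q) := by ring
      have hdnn : 0 ≤ 2 * x * (1 - 1 / q) := by
        apply mul_nonneg (by positivity); linarith
      have habs : |x / q - y| ≤ (2 - 1 / q) * x - y := by
        rw [abs_le]
        constructor
        · linarith
        · linarith
      have hgs : g s = ((2 - 1 / q) * x - y) * Real.exp (μ * s) := by
        have e1 : Real.exp (a * t) * Real.exp ((μ - a) * s)
            = Real.exp (a * (t - s)) * Real.exp (μ * s) := by
          rw [← Real.exp_add, ← Real.exp_add]; ring_nf
        have e2 : Real.exp (-t) * Real.exp ((μ + 1) * s)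
            = Real.exp (-(t - s)) * Real.exp (μ * s) := by
          rw [← Real.exp_add, ← Real.exp_add]; ring_nf
        simp only [hgdef, hxdef, hydef]
        rw [mul_assoc, e1, e2]; ring
      rw [hgs]
      exact mul_le_mul_of_nonneg_right habs (Real.exp_pos _).le
    -- integrability of LHS
    have hcont : Continuous fun s =>
        |Real.exp (a * (t - s)) / q - Real.exp (-(t - s))| * Real.exp (μ * s) := by
      fun_prop
    have hf_int : IntegrableOn
        (fun s => |Real.exp (a * (t - s)) / q - Real.exp (-(t - s))| * Real.exp (μ * s))
        (Set.Iio t) := by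
      apply Integrable.mono (hg_int.mono_set Set.Iio_subset_Iic_self)
        hcont.aestronglyMeasurable
      rw [ae_restrict_iff' measurableSet_Iio]
      filter_upwards with s hs
      have h1 := hpt s hs
      have h2 : 0 ≤ |Real.exp (a * (t - s)) / q - Real.exp (-(t - s))| * Real.exp (μ * s) :=
        mul_nonneg (abs_nonneg _) (Real.exp_pos _).le
      rw [Real.norm_eq_abs, Real.norm_eq_abs, abs_of_nonneg h2]
      exact h1.trans (le_abs_self _)
    -- compare integrals
    have hmono := setIntegral_mono_on hf_int (hg_int.mono_set Set.Iio_subset_Iic_self)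
      measurableSet_Iio hpt
    -- compute ∫ g
    have hgval : ∫ s in Set.Iio t, g s
        = ((2 - 1 / q) / (μ - a) - 1 / (μ + 1)) * Real.exp (μ * t) := by
      rw [← integral_Iic_eq_integral_Iio, hgdef]
      rw [integral_sub (((expIic_integrableOn (μ - a) t hμa).const_mul _))
        ((expIic_integrableOn (μ + 1) t hμ1).const_mul _),
        integral_const_mul, integral_const_mul, expIic_integral _ _ hμa,
        expIic_integral _ _ hμ1]
      have e1 : Real.exp (a * t) * Real.exp ((μ - a) * t) = Real.exp (μ * t) := by
        rw [← Real.exp_add]; ring_nf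
      have e2 : Real.exp (-t) * Real.exp ((μ + 1) * t) = Real.exp (μ * t) := by
        rw [← Real.exp_add]; ring_nf
      rw [show (2 - 1 / q) * Real.exp (a * t) * (Real.exp ((μ - a) * t) / (μ - a))
          = (2 - 1 / q) * (Real.exp (a * t) * Real.exp ((μ - a) * t)) / (μ - a) by ring,
        show Real.exp (-t) * (Real.exp ((μ + 1) * t) / (μ + 1))
          = (Real.exp (-t) * Real.exp ((μ + 1) * t)) / (μ + 1) by ring, e1, e2]
      ring
    -- final constant inequality
    have hC : C₁ ε = -(1 / a) * (2 - 1 / q + a) := by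
      rw [hC₁ ε hε, ← hqdef, ← hadef]; ring_nf
    have hfinal : (2 - 1 / q) / (μ - a) - 1 / (μ + 1) ≤ -(1 / a) * (2 - 1 / q + a) := by
      have hA1 : 1 ≤ 2 - 1 / q := by
        have : 1 / q < 1 := by rw [div_lt_one hq0]; exact hq1
        linarith
      have hkey : -(1 / a) * (2 - 1 / q + a) - ((2 - 1 / q) / (μ - a) - 1 / (μ + 1))
          = (μ * ((2 - 1 / q) * (μ + 1) - (-a) * (μ - a))) / ((-a) * (μ - a) * (μ + 1)) := by
        rw [eq_div_iff (mul_pos (mul_pos (neg_pos.mpr ha0) hμa) hμ1).ne']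
        field_simp [ha0.ne, hμa.ne', hμ1.ne']
        ring
      have hnum : 0 ≤ μ * ((2 - 1 / q) * (μ + 1) - (-a) * (μ - a)) := by
        apply mul_nonneg hμ
        nlinarith
      have hden : 0 < (-a) * (μ - a) * (μ + 1) :=
        mul_pos (mul_pos (neg_pos.mpr ha0) hμa) hμ1
      nlinarith [div_nonneg hnum hden.le]
    calc (∫ s in Set.Iio t,
        |Real.exp (a * (t - s)) / q - Real.exp (-(t - s))| * Real.exp (μ * s))
        ≤ ∫ s in Set.Iio t, g s := hmono
      _ = ((2 - 1 / q) / (μ - a) - 1 / (μ + 1)) * Real.exp (μ * t) := hgval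
      _ ≤ (-(1 / a) * (2 - 1 / q + a)) * Real.exp (μ * t) :=
          mul_le_mul_of_nonneg_right hfinal (Real.exp_pos _).le
      _ = C₁ ε * Real.exp (μ * t) := by rw [hC]
  · -- limit
    set F : ℝ → ℝ := fun ε =>
      ((1 + Real.sqrt (1 + 4 * ε ^ 2)) / 2) *
        (2 - 1 / Real.sqrt (1 + 4 * ε ^ 2) - 2 / (1 + Real.sqrt (1 + 4 * ε ^ 2))) with hFdef
    have heq : F =ᶠ[nhdsWithin 0 (Set.Ioi 0)] C₁ := by
      filter_upwards [self_mem_nhdsWithin] with ε hε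
      have hε : (0:ℝ) < ε := hε
      set q := Real.sqrt (1 + 4 * ε ^ 2) with hqdef
      have hqsq : q ^ 2 = 1 + 4 * ε ^ 2 := Real.sq_sqrt (by positivity)
      have hq1 : 1 < q := by nlinarith [Real.sqrt_nonneg (1 + 4 * ε ^ 2), hqsq, sq_nonneg ε]
      have hq0 : 0 < q := lt_trans one_pos hq1
      rw [hC₁ ε hε, halt ε hε, hFdef, ← hqdef]
      have h1 : (1:ℝ) + q ≠ 0 := by positivity
      field_simp
      ring
    have hF0 : F 0 = 0 := by
      rw [hFdef]
      norm_num
    have hFcont : ContinuousAt F 0 := by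
      have hqc : Continuous fun ε : ℝ => Real.sqrt (1 + 4 * ε ^ 2) :=
        Real.continuous_sqrt.comp (continuous_const.add (continuous_const.mul (continuous_pow 2)))
      have hq0' : Real.sqrt (1 + 4 * (0:ℝ) ^ 2) = 1 := by norm_num
      apply ContinuousAt.mul
      · exact ((continuousAt_const.add hqc.continuousAt).div continuousAt_const (by norm_num))
      · apply ContinuousAt.sub
        · apply ContinuousAt.sub continuousAt_const
          exact continuousAt_const.div hqc.continuousAt (by rw [hq0']; norm_num)
        · exact continuousAt_const.div (continuousAt_const.add hqc.continuousAt)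
            (by rw [hq0']; norm_num)
    have : Tendsto F (nhdsWithin 0 (Set.Ioi 0)) (nhds 0) := by
      have h := hFcont.tendsto
      rw [hF0] at h
      exact h.mono_left nhdsWithin_le_nhds
    exact this.congr' heq
end

section
/- Let M : ℂ → Matrix(N,N,ℂ) be continuous with ‖M(s)‖ ≤ K for all s on a vertical line Σ = {s : Re s = b}, and set Δ_ε(s) = (ε²s² − s)I + M(s). Fix ε₁ > 0 with 1 − ε₁²b ≥ 1/2. Then for every s ∈ Σ with |s| ≥ 4K and every ε ∈ (0, ε₁], the matrix Δ_ε(s) is invertible and |s| · ‖Δ_ε(s)⁻¹‖ ≤ 4. -/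
open Complex

set_option maxHeartbeats 1600000 in
theorem stmt_6 {N : ℕ} (b K ε₁ : ℝ) (hK : 0 < K) (hε₁ : 0 < ε₁)
    (hb : 1 - ε₁ ^ 2 * b ≥ 1 / 2)
    (M : ℂ → (EuclideanSpace ℂ (Fin N) →L[ℂ] EuclideanSpace ℂ (Fin N)))
    (hMcont : Continuous M)
    (hMbound : ∀ s : ℂ, s.re = b → ‖M s‖ ≤ K) :
    ∀ s : ℂ, s.re = b → ‖s‖ ≥ 4 * K → ∀ ε : ℝ, 0 < ε → ε ≤ ε₁ →
      ∃ T : EuclideanSpace ℂ (Fin N) →L[ℂ] EuclideanSpace ℂ (Fin N),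
        (((ε : ℂ) ^ 2 * s ^ 2 - s) • (ContinuousLinearMap.id ℂ (EuclideanSpace ℂ (Fin N))) + M s).comp T =
          ContinuousLinearMap.id ℂ (EuclideanSpace ℂ (Fin N)) ∧
        T.comp (((ε : ℂ) ^ 2 * s ^ 2 - s) • (ContinuousLinearMap.id ℂ (EuclideanSpace ℂ (Fin N))) + M s) =
          ContinuousLinearMap.id ℂ (EuclideanSpace ℂ (Fin N)) ∧
        ‖s‖ * ‖T‖ ≤ 4 := by
  intro s hs habs ε hε hεε₁
  have hKs : (0:ℝ) < ‖s‖ := lt_of_lt_of_le (by positivity) habs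
  set lc : ℂ := (ε:ℂ) ^ 2 * s ^ 2 - s with hlc
  have hεb : ε ^ 2 * b ≤ 1 / 2 := by
    rcases le_or_gt b 0 with h | h
    · nlinarith [sq_nonneg ε]
    · nlinarith [mul_le_mul_of_nonneg_right (by nlinarith : ε ^ 2 ≤ ε₁ ^ 2) h.le]
  have hre : ((ε:ℂ) ^ 2 * s - 1).re = ε ^ 2 * b - 1 := by
    have : ((ε:ℂ) ^ 2 * s - 1).re = (((ε ^ 2 : ℝ) : ℂ) * s).re - 1 := by
      push_cast; simp
    rw [this, Complex.re_ofReal_mul, hs]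
  have h1 : (1:ℝ) / 2 ≤ ‖(ε:ℂ) ^ 2 * s - 1‖ := by
    have h2 : |((ε:ℂ) ^ 2 * s - 1).re| ≤ ‖(ε:ℂ) ^ 2 * s - 1‖ :=
      Complex.abs_re_le_norm _
    rw [hre] at h2
    have : (1:ℝ) / 2 ≤ |ε ^ 2 * b - 1| := by
      rw [abs_sub_comm]
      calc (1:ℝ)/2 ≤ 1 - ε ^ 2 * b := by linarith
        _ ≤ |1 - ε ^ 2 * b| := le_abs_self _
    linarith
  have habs_lc : ‖s‖ / 2 ≤ ‖lc‖ := by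
    have hfac : lc = s * ((ε:ℂ) ^ 2 * s - 1) := by rw [hlc]; ring
    rw [hfac, norm_mul]
    nlinarith
  have hpos : (0:ℝ) < ‖lc‖ := by nlinarith
  have hlc0 : lc ≠ 0 := by
    intro h; rw [h] at hpos; simp at hpos
  have hM : ‖M s‖ ≤ K := hMbound s hs
  set t : EuclideanSpace ℂ (Fin N) →L[ℂ] EuclideanSpace ℂ (Fin N) := -(lc⁻¹ • M s) with htdef
  have ht2 : ‖t‖ ≤ 1 / 2 := by
    rw [htdef, norm_neg, norm_smul lc⁻¹ (M s), norm_inv]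
    rw [inv_mul_le_iff₀ hpos]
    nlinarith
  have ht : ‖t‖ < 1 := lt_of_le_of_lt ht2 (by norm_num)
  set u : (EuclideanSpace ℂ (Fin N) →L[ℂ] EuclideanSpace ℂ (Fin N))ˣ := Units.oneSub t ht with hu
  have ha : lc • (u : EuclideanSpace ℂ (Fin N) →L[ℂ] EuclideanSpace ℂ (Fin N)) = lc • (1 : EuclideanSpace ℂ (Fin N) →L[ℂ] EuclideanSpace ℂ (Fin N)) + M s := by
    have huv : (u : EuclideanSpace ℂ (Fin N) →L[ℂ] EuclideanSpace ℂ (Fin N)) = 1 - t := rfl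
    rw [huv, htdef, smul_sub, smul_neg, smul_smul, mul_inv_cancel₀ hlc0, one_smul]
    abel
  set T : EuclideanSpace ℂ (Fin N) →L[ℂ] EuclideanSpace ℂ (Fin N) := lc⁻¹ • ((↑u⁻¹ : EuclideanSpace ℂ (Fin N) →L[ℂ] EuclideanSpace ℂ (Fin N))) with hT
  have key1 : (lc • (1 : EuclideanSpace ℂ (Fin N) →L[ℂ] EuclideanSpace ℂ (Fin N)) + M s) * T = 1 := by
    rw [← ha, hT, smul_mul_smul_comm, u.mul_inv, mul_inv_cancel₀ hlc0, one_smul]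
  have key2 : T * (lc • (1 : EuclideanSpace ℂ (Fin N) →L[ℂ] EuclideanSpace ℂ (Fin N)) + M s) = 1 := by
    rw [← ha, hT, smul_mul_smul_comm, u.inv_mul, inv_mul_cancel₀ hlc0, one_smul]
  have hinv : ‖(↑u⁻¹ : EuclideanSpace ℂ (Fin N) →L[ℂ] EuclideanSpace ℂ (Fin N))‖ ≤ 2 := by
    have huinv : (↑u⁻¹ : EuclideanSpace ℂ (Fin N) →L[ℂ] EuclideanSpace ℂ (Fin N)) = ∑' n : ℕ, t ^ n := rfl
    rw [huinv]
    refine le_trans (tsum_geometric_le_of_norm_lt_one t ht) ?_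
    have hone : ‖(1 : EuclideanSpace ℂ (Fin N) →L[ℂ] EuclideanSpace ℂ (Fin N))‖ ≤ 1 := by
      rw [ContinuousLinearMap.one_def]; exact ContinuousLinearMap.norm_id_le
    have h12 : (1:ℝ) / 2 ≤ 1 - ‖t‖ := by linarith
    have h3 : (1 - ‖t‖)⁻¹ ≤ ((1:ℝ)/2)⁻¹ := inv_anti₀ (by norm_num) h12
    have h4 : ((1:ℝ)/2)⁻¹ = 2 := by norm_num
    linarith
  refine ⟨T, ?_, ?_, ?_⟩
  · rw [← ContinuousLinearMap.mul_def, ← ContinuousLinearMap.one_def]; exact key1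
  · rw [← ContinuousLinearMap.mul_def, ← ContinuousLinearMap.one_def]; exact key2
  have hTn : ‖T‖ ≤ ‖lc‖⁻¹ * 2 := by
    rw [hT, norm_smul lc⁻¹ ((↑u⁻¹ : EuclideanSpace ℂ (Fin N) →L[ℂ] EuclideanSpace ℂ (Fin N))), norm_inv]
    exact mul_le_mul_of_nonneg_left hinv (by positivity)
  calc ‖s‖ * ‖T‖ ≤ ‖s‖ * (‖lc‖⁻¹ * 2) :=
        mul_le_mul_of_nonneg_left hTn hKs.le
    _ = (2 * ‖s‖) / ‖lc‖ := by ring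
    _ ≤ 4 := by rw [div_le_iff₀ hpos]; linarith
end

section
/- Let D, τ > 0, c > 0 with f(S⁰) > D e^{Dτ}, and let λ₀ > 0 satisfy (λ₀ + D)e^{(λ₀+D)τ} = f(S⁰). If λ ∈ ℂ is any root of (λ + D)(λ + D − e^{−Dτ} f(S⁰) e^{−λτ}) = 0 with λ ∉ ℝ, then Re λ < λ₀. Hence λ₀ is a dominant real root of this characteristic equation. -/
theorem stmt_9 (D τ A lam0 : ℝ) (hD : 0 < D) (hτ : 0 < τ)
    (hA : A > D * Real.exp (D * τ))
    (hlam0 : 0 < lam0) (hchar : (lam0 + D) * Real.exp ((lam0 + D) * τ) = A) :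
    ∀ l : ℂ, l.im ≠ 0 →
      (l + (D : ℂ)) * (l + (D : ℂ) - (Real.exp (-(D * τ)) : ℂ) * (A : ℂ) * Complex.exp (-(l * (τ : ℂ)))) = 0 →
      l.re < lam0 := by
  intro l him hroot
  have hlD : l + (D : ℂ) ≠ 0 := by
    intro h
    apply him
    have : (l + (D : ℂ)).im = 0 := by rw [h]; simp
    simpa using this
  have hfac : l + (D : ℂ) = (Real.exp (-(D * τ)) : ℂ) * (A : ℂ) * Complex.exp (-(l * (τ : ℂ))) := by
    rcases mul_eq_zero.mp hroot with h | h
    · exact absurd h hlD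
    · linear_combination h
  have hApos : 0 < A := lt_trans (by positivity) hA
  set x := l.re with hx
  -- take absolute values
  have habs : ‖l + (D : ℂ)‖ = Real.exp (-(D * τ)) * A * Real.exp (-(x * τ)) := by
    rw [hfac, norm_mul, norm_mul, Complex.norm_real, Complex.norm_real, Complex.norm_exp, Real.norm_eq_abs, Real.norm_eq_abs]
    rw [abs_of_pos (Real.exp_pos _), abs_of_pos hApos]
    congr 1
    simp [Complex.mul_re, hx]
  have hre_lt : x + D < ‖l + (D : ℂ)‖ := by
    have h1 : |(l + (D : ℂ)).re| < ‖l + (D : ℂ)‖ := by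
      apply Complex.abs_re_lt_norm.mpr
      simpa using him
    have h2 : (l + (D : ℂ)).re = x + D := by simp [hx]
    calc x + D ≤ |(l + (D : ℂ)).re| := by rw [h2]; exact le_abs_self _
      _ < _ := h1
  -- (x+D) e^{(x+D)τ} < A
  have key : (x + D) * Real.exp ((x + D) * τ) < A := by
    have h3 : ‖l + (D : ℂ)‖ * Real.exp ((x + D) * τ) = A := by
      have he : Real.exp (-(D * τ)) * Real.exp (-(x * τ)) * Real.exp ((x + D) * τ) = 1 := by
        rw [← Real.exp_add, ← Real.exp_add,
          show -(D * τ) + -(x * τ) + (x + D) * τ = 0 by ring, Real.exp_zero]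
      rw [habs]
      linear_combination A * he
    calc (x + D) * Real.exp ((x + D) * τ)
        < ‖l + (D : ℂ)‖ * Real.exp ((x + D) * τ) :=
          mul_lt_mul_of_pos_right hre_lt (Real.exp_pos _)
      _ = A := h3
  by_contra hxl
  push_neg at hxl
  have hmono : (lam0 + D) * Real.exp ((lam0 + D) * τ) ≤ (x + D) * Real.exp ((x + D) * τ) := by
    have h1 : lam0 + D ≤ x + D := by linarith
    have h2 : Real.exp ((lam0 + D) * τ) ≤ Real.exp ((x + D) * τ) :=
      Real.exp_le_exp.mpr (by nlinarith)
    have h0 : 0 < lam0 + D := by linarith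
    nlinarith [Real.exp_pos ((lam0 + D) * τ)]
  rw [hchar] at hmono
  linarith
end

section
/- Let L : C([−τ,0]; ℝ) → ℝ be a nonzero positive bounded linear functional (L(φ) ≥ 0 whenever φ ≥ 0) and b, K > 0 with K·L(1) = 1. Suppose λ = iω with ω > 0 and 0 < ωτ < π/2 satisfies λ + bK·L(e^{λ·}) = 0 (where L is extended complex-linearly). Then a contradiction follows; i.e., the characteristic equation λ + bK L(e^{λ·}) = 0 has no purely imaginary root iω with 0 < ωτ < π/2. -/
open Real

theorem stmt_10 (τ b K ω : ℝ) (hτ : 0 < τ) (hb : 0 < b) (hω : 0 < ω)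
    (hωτ : ω * τ < Real.pi / 2)
    (L : C(Set.Icc (-τ) (0 : ℝ), ℝ) →L[ℝ] ℝ)
    (hLpos : ∀ φ : C(Set.Icc (-τ) (0 : ℝ), ℝ), (∀ θ, 0 ≤ φ θ) → 0 ≤ L φ)
    (hLne : L ≠ 0)
    (hK : K * L (ContinuousMap.const _ 1) = 1)
    (hre : b * K * L ⟨fun θ => Real.cos (ω * (θ : ℝ)),
      Real.continuous_cos.comp (continuous_const.mul continuous_subtype_val)⟩ = 0)
    (him : ω + b * K * L ⟨fun θ => Real.sin (ω * (θ : ℝ)),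
      Real.continuous_sin.comp (continuous_const.mul continuous_subtype_val)⟩ = 0) :
    False := by
  set one : C(Set.Icc (-τ) (0 : ℝ), ℝ) := ContinuousMap.const _ 1 with hone
  have hL1 : 0 ≤ L one := hLpos one (fun θ => zero_le_one)
  have hL1ne : L one ≠ 0 := by
    intro h; rw [h, mul_zero] at hK; exact (one_ne_zero : (1:ℝ) ≠ 0) hK.symm
  have hL1pos : 0 < L one := lt_of_le_of_ne hL1 (Ne.symm hL1ne)
  have hKpos : 0 < K := by
    by_contra h
    push_neg at h
    nlinarith
  set φ : C(Set.Icc (-τ) (0 : ℝ), ℝ) := ⟨fun θ => Real.cos (ω * (θ : ℝ)),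
      Real.continuous_cos.comp (continuous_const.mul continuous_subtype_val)⟩ with hφ
  have hLφ : L φ = 0 := by
    have hbK : b * K ≠ 0 := ne_of_gt (mul_pos hb hKpos)
    exact (mul_eq_zero.mp hre).resolve_left hbK
  set c : ℝ := Real.cos (ω * τ) with hc
  have hcpos : 0 < c := Real.cos_pos_of_mem_Ioo ⟨by nlinarith [Real.pi_pos], hωτ⟩
  have hψ : 0 ≤ L (φ - c • one) := by
    apply hLpos
    intro θ
    obtain ⟨θ, hθ1, hθ2⟩ := θ
    simp only [ContinuousMap.sub_apply, ContinuousMap.smul_apply, hφ, hone,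
      ContinuousMap.coe_mk, ContinuousMap.const_apply, smul_eq_mul, mul_one, sub_nonneg]
    have h1 : |ω * θ| ≤ ω * τ := by
      rw [abs_le]
      constructor <;> nlinarith
    calc c ≤ Real.cos |ω * θ| := by
            apply Real.cos_le_cos_of_nonneg_of_le_pi (abs_nonneg _)
            · nlinarith [Real.pi_pos]
            · exact h1
      _ = Real.cos (ω * θ) := Real.cos_abs _
  rw [map_sub, map_smul, hLφ, smul_eq_mul] at hψ
  nlinarith
end

section
/- Let η : [−τ,0] → Matrix(N,N,ℝ) have bounded variation, defining L₀(φ) = ∫_{−τ}^0 dη(θ) φ(θ), and let x : [−τ,∞) → ℝᴺ be continuous with x(t) = O(e^{−at}) as t → ∞. Then for every s ∈ ℂ with Re s > −a, the Laplace transform of t ↦ L₀(x_t) satisfies ∫_0^∞ e^{−st} L₀(x_t) dt = L₀( e^{s·} ∫_{·}^0 e^{−su} x(u) du ) + L₀(e^{s·}I) · x̃(s), where x̃(s) = ∫_0^∞ e^{−st} x(t) dt and x_t(θ) = x(t+θ). -/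
open MeasureTheory

theorem stmt_13 {N : ℕ} (τ a : ℝ) (hτ : 0 < τ) (s : ℂ) (hs : s.re > -a)
    (x : ℝ → EuclideanSpace ℂ (Fin N)) (hx : Continuous x)
    (hdecay : ∃ C : ℝ, ∀ t : ℝ, 0 ≤ t → ‖x t‖ ≤ C * Real.exp (-a * t))
    (L₀ : C(Set.Icc (-τ) (0 : ℝ), EuclideanSpace ℂ (Fin N)) →L[ℂ] EuclideanSpace ℂ (Fin N))
    (xt : ℝ → C(Set.Icc (-τ) (0 : ℝ), EuclideanSpace ℂ (Fin N)))
    (hxt : ∀ t : ℝ, ∀ θ : Set.Icc (-τ) (0 : ℝ), xt t θ = x (t + θ))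
    (g h : C(Set.Icc (-τ) (0 : ℝ), EuclideanSpace ℂ (Fin N)))
    (hg : ∀ θ : Set.Icc (-τ) (0 : ℝ),
      g θ = Complex.exp (s * ((θ : ℝ) : ℂ)) •
        ∫ u in ((θ : ℝ))..0, Complex.exp (-s * (u : ℂ)) • x u)
    (hh : ∀ θ : Set.Icc (-τ) (0 : ℝ),
      h θ = Complex.exp (s * ((θ : ℝ) : ℂ)) •
        ∫ t in Set.Ioi (0 : ℝ), Complex.exp (-s * (t : ℂ)) • x t) :
    (∫ t in Set.Ioi (0 : ℝ), Complex.exp (-s * (t : ℂ)) • L₀ (xt t)) = L₀ g + L₀ h := by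
  classical
  obtain ⟨C, hC⟩ := hdecay
  obtain ⟨M, hM⟩ := (isCompact_Icc (a := -τ) (b := (0:ℝ))).exists_bound_of_continuousOn
    hx.continuousOn
  set K : ℝ := max C (max M 0 * Real.exp (|a| * τ)) with hKdef
  have hK0 : 0 ≤ K := le_max_of_le_right (by positivity)
  have hb : 0 < a + s.re := by linarith
  -- uniform decay bound on [-τ, ∞)
  have hKb : ∀ u : ℝ, -τ ≤ u → ‖x u‖ ≤ K * Real.exp (-a * u) := by
    intro u hu
    rcases le_or_gt 0 u with h0 | h0
    · exact (hC u h0).trans (mul_le_mul_of_nonneg_right (le_max_left _ _) (Real.exp_pos _).le)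
    · have h1 : ‖x u‖ ≤ M := hM u ⟨hu, h0.le⟩
      have habs : |a * u| ≤ |a| * τ := by
        rw [abs_mul]
        exact mul_le_mul_of_nonneg_left (by rw [abs_of_neg h0]; linarith) (abs_nonneg a)
      have h3 : Real.exp (-(|a| * τ)) ≤ Real.exp (-a * u) := by
        apply Real.exp_le_exp.mpr
        have := le_abs_self (a * u)
        linarith
      calc ‖x u‖ ≤ max M 0 := h1.trans (le_max_left _ _)
        _ = max M 0 * Real.exp (|a| * τ) * Real.exp (-(|a| * τ)) := by
            rw [mul_assoc, ← Real.exp_add]; simp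
        _ ≤ K * Real.exp (-a * u) :=
            mul_le_mul (le_max_right _ _) h3 (Real.exp_pos _).le hK0
  -- the basic integrand
  set f : ℝ → EuclideanSpace ℂ (Fin N) := fun u => Complex.exp (-s * (u : ℂ)) • x u with hfdef
  have hfc : Continuous f := by
    exact Continuous.smul (Complex.continuous_exp.comp (continuous_const.mul Complex.continuous_ofReal)) hx
  have hfnorm : ∀ u : ℝ, ‖f u‖ = Real.exp (-s.re * u) * ‖x u‖ := by
    intro u
    rw [hfdef]
    simp only [norm_smul, Complex.norm_exp]
    congr 2
    simp [Complex.mul_re]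
  have hfint : ∀ c : ℝ, -τ ≤ c → IntegrableOn f (Set.Ioi c) := by
    intro c hc
    refine Integrable.mono' ((exp_neg_integrableOn_Ioi c hb).const_mul K)
      hfc.aestronglyMeasurable ?_
    filter_upwards [ae_restrict_mem measurableSet_Ioi] with u hu
    rw [hfnorm]
    have h1 : ‖x u‖ ≤ K * Real.exp (-a * u) := hKb u (hc.trans (le_of_lt hu))
    calc Real.exp (-s.re * u) * ‖x u‖
        ≤ Real.exp (-s.re * u) * (K * Real.exp (-a * u)) :=
          mul_le_mul_of_nonneg_left h1 (Real.exp_pos _).le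
      _ = K * Real.exp (-(a + s.re) * u) := by
          rw [mul_comm, mul_assoc, ← Real.exp_add]; ring_nf
  -- translation
  have htrans : ∀ θ : ℝ, (∫ t in Set.Ioi (0:ℝ), f (t + θ)) = ∫ u in Set.Ioi θ, f u := by
    intro θ
    have h1 := (measurePreserving_add_right volume θ).setIntegral_preimage_emb
      (Homeomorph.addRight θ).isClosedEmbedding.measurableEmbedding f (Set.Ioi θ)
    rw [show ((· + θ) ⁻¹' Set.Ioi θ) = Set.Ioi (0:ℝ) from by ext t; simp] at h1
    exact h1
  -- continuity of xt
  have hxtc : Continuous xt := by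
    let φ : C(ℝ × (Set.Icc (-τ) (0:ℝ)), EuclideanSpace ℂ (Fin N)) :=
      ⟨fun p => x (p.1 + p.2), hx.comp (continuous_fst.add
        (continuous_subtype_val.comp continuous_snd))⟩
    have h1 : xt = fun t => φ.curry t :=
      funext fun t => ContinuousMap.ext fun θ => by rw [hxt]; rfl
    rw [h1]
    exact φ.curry.continuous
  -- the C(...)-valued integrand
  set F : ℝ → C(Set.Icc (-τ) (0:ℝ), EuclideanSpace ℂ (Fin N)) :=
    fun t => Complex.exp (-s * (t : ℂ)) • xt t with hFdef
  have hFc : Continuous F :=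
    (Complex.continuous_exp.comp (continuous_const.mul Complex.continuous_ofReal)).smul hxtc
  have hFapp : ∀ (t : ℝ) (θ : Set.Icc (-τ) (0:ℝ)),
      F t θ = Complex.exp (-s * (t : ℂ)) • x (t + θ) := by
    intro t θ
    rw [hFdef]
    simp [hxt]
  have hFint : IntegrableOn F (Set.Ioi (0:ℝ)) := by
    refine Integrable.mono' ((exp_neg_integrableOn_Ioi 0 hb).const_mul
      (K * Real.exp (|a| * τ))) hFc.aestronglyMeasurable ?_
    filter_upwards [ae_restrict_mem measurableSet_Ioi] with t ht
    refine (ContinuousMap.norm_le _ (by positivity)).mpr fun θ => ?_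
    rw [hFapp]
    have hθ1 : -τ ≤ (θ : ℝ) := θ.2.1
    have hθ2 : (θ : ℝ) ≤ 0 := θ.2.2
    have htθ : -τ ≤ t + (θ : ℝ) := by
      have : (0:ℝ) < t := ht
      linarith
    have h1 : ‖x (t + (θ : ℝ))‖ ≤ K * Real.exp (-a * (t + θ)) := hKb _ htθ
    have h2 : Real.exp (-a * (t + θ)) ≤ Real.exp (|a| * τ) * Real.exp (-a * t) := by
      rw [← Real.exp_add]
      apply Real.exp_le_exp.mpr
      have habs : |a * θ| ≤ |a| * τ := by
        rw [abs_mul]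
        refine mul_le_mul_of_nonneg_left ?_ (abs_nonneg a)
        rw [abs_le]; constructor <;> linarith
      have := neg_abs_le (a * (θ : ℝ))
      nlinarith [abs_nonneg (a * (θ:ℝ))]
    have hns : ‖Complex.exp (-s * (t : ℂ))‖ = Real.exp (-s.re * t) := by
      simp only [Complex.norm_exp]
      congr 1
      simp [Complex.mul_re]
    calc ‖Complex.exp (-s * (t : ℂ)) • x (t + (θ : ℝ))‖
        = Real.exp (-s.re * t) * ‖x (t + (θ : ℝ))‖ := by rw [norm_smul, hns]
      _ ≤ Real.exp (-s.re * t) * (K * (Real.exp (|a| * τ) * Real.exp (-a * t))) := by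
          refine mul_le_mul_of_nonneg_left (h1.trans ?_) (Real.exp_pos _).le
          exact mul_le_mul_of_nonneg_left h2 hK0
      _ = K * Real.exp (|a| * τ) * Real.exp (-(a + s.re) * t) := by
          rw [show (-(a + s.re) * t) = -a * t + -s.re * t by ring, Real.exp_add]; ring
  -- the integrated continuous function equals g + h
  have hsum : (∫ t in Set.Ioi (0:ℝ), F t) = g + h := by
    apply ContinuousMap.ext
    intro θ
    have hθ1 : -τ ≤ (θ : ℝ) := θ.2.1
    have hθ2 : (θ : ℝ) ≤ 0 := θ.2.2
    have hev := ContinuousLinearMap.integral_comp_comm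
      (ContinuousMap.evalCLM ℂ θ) hFint
    have hLHS : (∫ t in Set.Ioi (0:ℝ), F t) θ
        = ∫ t in Set.Ioi (0:ℝ), Complex.exp (-s * (t : ℂ)) • x (t + θ) := by
      rw [show ((∫ t in Set.Ioi (0:ℝ), F t) θ)
          = (ContinuousMap.evalCLM ℂ θ) (∫ t in Set.Ioi (0:ℝ), F t) from rfl, ← hev]
      exact setIntegral_congr_fun measurableSet_Ioi fun t _ => hFapp t θ
    have hrw : ∀ t : ℝ, Complex.exp (-s * (t : ℂ)) • x (t + θ)
        = Complex.exp (s * ((θ : ℝ) : ℂ)) • f (t + θ) := by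
      intro t
      rw [hfdef]
      simp only [smul_smul, ← Complex.exp_add]
      congr 2
      push_cast
      ring
    have hsplit : (∫ u in Set.Ioi ((θ : ℝ)), f u)
        = (∫ u in Set.Ioc ((θ : ℝ)) 0, f u) + ∫ u in Set.Ioi (0:ℝ), f u := by
      rw [← setIntegral_union (Set.Ioc_disjoint_Ioi le_rfl) measurableSet_Ioi
        ((hfint θ hθ1).mono_set Set.Ioc_subset_Ioi_self) (hfint 0 (by linarith)),
        Set.Ioc_union_Ioi_eq_Ioi hθ2]
    rw [hLHS, ContinuousMap.add_apply, hg, hh]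
    calc (∫ t in Set.Ioi (0:ℝ), Complex.exp (-s * (t : ℂ)) • x (t + θ))
        = ∫ t in Set.Ioi (0:ℝ), Complex.exp (s * ((θ : ℝ) : ℂ)) • f (t + θ) := by
          exact setIntegral_congr_fun measurableSet_Ioi fun t _ => hrw t
      _ = Complex.exp (s * ((θ : ℝ) : ℂ)) • ∫ t in Set.Ioi (0:ℝ), f (t + θ) :=
          integral_smul _ _
      _ = Complex.exp (s * ((θ : ℝ) : ℂ)) •
            ((∫ u in Set.Ioc ((θ : ℝ)) 0, f u) + ∫ u in Set.Ioi (0:ℝ), f u) := by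
          rw [htrans, hsplit]
      _ = Complex.exp (s * ((θ : ℝ) : ℂ)) • (∫ u in ((θ : ℝ))..0, f u)
          + Complex.exp (s * ((θ : ℝ) : ℂ)) • ∫ u in Set.Ioi (0:ℝ), f u := by
          rw [smul_add, intervalIntegral.integral_of_le hθ2]
  -- conclude
  calc (∫ t in Set.Ioi (0:ℝ), Complex.exp (-s * (t : ℂ)) • L₀ (xt t))
      = ∫ t in Set.Ioi (0:ℝ), L₀ (F t) := by
        refine setIntegral_congr_fun measurableSet_Ioi fun t _ => ?_
        rw [hFdef]; simp
    _ = L₀ (∫ t in Set.Ioi (0:ℝ), F t) :=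
        ContinuousLinearMap.integral_comp_comm L₀ hFint
    _ = L₀ g + L₀ h := by rw [hsum, map_add]
end
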